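/- arXiv:2205.12553 — 3 statements merged into one kernel-verified Lean document; each statement's English description precedes it below -/
import Mathlib

section
/- Let G be a finite group having property (I_p) with respect to a subgroup H. Then for every subgroup L ≤ G whose order is coprime to p, the permutation module k[G/H] is isomorphic to a direct summand of the permutation module k[G/L]; in particular |L| ≤ |H|, that is, |H| is maximal among the orders of p'-subgroups of G. -/
/-!
Put `k[X] = MonoidAlgebra k X`. The transfer maps `k[G/H] → k[G/L]`, `gH ↦ ∑_{h ∈ H} ghL`, and
`k[G/L] → k[G/H]`, `gL ↦ ∑_{l ∈ L} glH`, are `k[G]`-linear and multiply the augmentation by `|H|`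
and `|L|` respectively. Their composite is therefore an endomorphism of `k[G/H]` that scales the
augmentation by `|H| |L| ≠ 0` in `k`, so it is not nilpotent. By Fitting's lemma an endomorphism
of the indecomposable module `k[G/H]` is either nilpotent or an automorphism, so the first
transfer is a split injection. Comparing dimensions gives `[G : H] ≤ [G : L]`, i.e. `|L| ≤ |H|`.
-/

/-- A module is indecomposable if it is nonzero and admits no nontrivial direct sum
decomposition. -/
def IsIndecomposableModule (R M : Type*) [Ring R] [AddCommMonoid M] [Module R M] : Prop :=
  Nontrivial M ∧ ∀ N N' : Submodule R M, IsCompl N N' → N = ⊥ ∨ N' = ⊥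

/-- The permutation module `k[G/H]`, as a module over the group algebra `k[G]`. -/
abbrev PermMod (k : Type*) [Field k] {G : Type*} [Group G] (H : Subgroup G) :=
  (Representation.ofMulAction k G (G ⧸ H)).asModule

/-- A finite group `G` has property `(I_p)` with respect to a subgroup `H` if `H` is a
`p'`-subgroup and the permutation module `k[G/H]` is indecomposable (equivalently, it is the
projective cover of the trivial `k[G]`-module). -/
def HasIp (k : Type*) [Field k] {G : Type*} [Group G] (p : ℕ) (H : Subgroup G) : Prop :=
  ¬ (p ∣ Nat.card H) ∧ IsIndecomposableModule (MonoidAlgebra k G) (PermMod k H)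

theorem IsIndecomposableModule.bijective_or_isNilpotent {R M : Type*} [Ring R] [AddCommGroup M]
    [Module R M] [IsNoetherian R M] [IsArtinian R M] (hM : IsIndecomposableModule R M)
    (f : Module.End R M) : Function.Bijective f ∨ IsNilpotent f := by
  -- Fitting's decomposition for `f ^ (n + 1)` rather than `f ^ n`: the case `n = 0` says nothing.
  obtain ⟨n, hn⟩ :=
    ((Filter.tendsto_add_atTop_nat 1).eventually f.eventually_isCompl_ker_pow_range_pow).exists
  rcases hM.2 _ _ hn with hker | hrange
  · refine .inl (IsArtinian.bijective_of_injective_endomorphism f ?_)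
    have hinj : Function.Injective ⇑((f ^ n) ∘ₗ f) := by
      rw [← Module.End.mul_eq_comp, ← pow_succ]
      exact LinearMap.ker_eq_bot.mp hker
    exact Function.Injective.of_comp (f := ⇑(f ^ n)) hinj
  · exact .inr ⟨n + 1, LinearMap.range_eq_bot.mp hrange⟩

theorem Module.End.not_isNilpotent_of_map_apply_eq_mul {R M K : Type*} [Semiring R]
    [AddCommMonoid M] [Module R M] [Semiring K] [NoZeroDivisors K] {f : Module.End R M}
    (φ : M →+ K) {c : K} (hc : c ≠ 0) (hφ : ∀ x, φ (f x) = c * φ x) {x : M} (hx : φ x ≠ 0) :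
    ¬ IsNilpotent f := by
  rintro ⟨n, hn⟩
  have hpow (m : ℕ) : φ ((f ^ m) x) = c ^ m * φ x := by
    induction m with
    | zero => simp
    | succ m ih => rw [pow_succ', Module.End.mul_apply, hφ, ih, pow_succ', mul_assoc]
  have h0 := hpow n
  rw [hn, LinearMap.zero_apply, map_zero] at h0
  exact mul_ne_zero (pow_ne_zero n hc) hx h0.symm

theorem LinearMap.exists_isCompl_linearEquiv_of_bijective_comp {R M N : Type*} [Ring R]
    [AddCommGroup M] [Module R M] [AddCommGroup N] [Module R N] (f : M →ₗ[R] N) (g : N →ₗ[R] M)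
    (h : Function.Bijective (g ∘ₗ f)) :
    ∃ P Q : Submodule R N, IsCompl P Q ∧ Nonempty (P ≃ₗ[R] M) := by
  let π := (LinearEquiv.ofBijective _ h).symm.toLinearMap ∘ₗ g
  have hπ : ∀ x, π (f x) = x := (LinearEquiv.ofBijective _ h).symm_apply_apply
  have hf : Function.Injective f := Function.LeftInverse.injective hπ
  let proj := (f ∘ₗ π).codRestrict (range f) fun x => mem_range_self f (π x)
  refine ⟨range f, ker proj, isCompl_of_proj ?_, ⟨(LinearEquiv.ofInjective f hf).symm⟩⟩
  rintro ⟨_, x, rfl⟩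
  exact Subtype.ext (congrArg f (hπ x))

theorem Subgroup.card_le_card_of_index_le {G : Type*} [Group G] [Finite G] {H L : Subgroup G}
    (h : H.index ≤ L.index) : Nat.card L ≤ Nat.card H := by
  refine Nat.le_of_mul_le_mul_left ?_ (Nat.pos_of_ne_zero L.index_ne_zero_of_finite)
  calc L.index * Nat.card L = H.index * Nat.card H := by rw [index_mul_card, index_mul_card]
    _ ≤ L.index * Nat.card H := Nat.mul_le_mul_right _ h

namespace MonoidAlgebra

variable (k : Type*) [CommRing k]

noncomputable def augmentation (X : Type*) : MonoidAlgebra k X →ₗ[k] k :=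
  (MonoidAlgebra.basis X k).constr k fun _ => 1

@[simp]
theorem augmentation_single {X : Type*} (x : X) (r : k) : augmentation k X (single x r) = r := by
  rw [← mul_one r, ← smul_eq_mul, ← smul_single, map_smul, ← basis_apply k,
    augmentation, Module.Basis.constr_basis]

end MonoidAlgebra

open MonoidAlgebra

namespace Representation

instance isNoetherian_asModule {k G V : Type*} [CommRing k] [IsNoetherianRing k] [Monoid G]
    [AddCommGroup V] [Module k V] [Module.Finite k V] (ρ : Representation k G V) :
    IsNoetherian (MonoidAlgebra k G) ρ.asModule :=
  isNoetherian_of_tower k inferInstance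

instance isArtinian_asModule {k G V : Type*} [CommRing k] [IsArtinianRing k] [Monoid G]
    [AddCommGroup V] [Module k V] [Module.Finite k V] (ρ : Representation k G V) :
    IsArtinian (MonoidAlgebra k G) ρ.asModule :=
  isArtinian_of_tower k inferInstance

variable {k : Type*} [CommRing k]

@[simp]
theorem augmentation_ofMulAction {G X : Type*} [Monoid G] [MulAction G X] (g : G)
    (x : MonoidAlgebra k X) : augmentation k X (ofMulAction k G X g x) = augmentation k X x := by
  have h : augmentation k X ∘ₗ ofMulAction k G X g = augmentation k X :=
    (MonoidAlgebra.basis X k).ext fun y => by simp [basis_apply, ofMulAction_single]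
  exact LinearMap.congr_fun h x

variable {G : Type*} [Group G]

section QuotientLift

variable {V : Type*} [AddCommMonoid V] [Module k V] (ρ : Representation k G V) (H : Subgroup G)
  (v : V) (hv : ∀ h ∈ H, ρ h v = v)

noncomputable def quotientLift : (ofMulAction k G (G ⧸ H)).IntertwiningMap ρ where
  toLinearMap := (MonoidAlgebra.basis (G ⧸ H) k).constr k fun x =>
    Quotient.liftOn' x (fun g => ρ g v) fun a b hab => by
      rw [← mul_inv_cancel_left a b, map_mul, Module.End.mul_apply,
        hv _ (QuotientGroup.leftRel_apply.mp hab)]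
  isIntertwining' g := (MonoidAlgebra.basis (G ⧸ H) k).ext fun x => by
    induction x using QuotientGroup.induction_on with
    | H a =>
      rw [LinearMap.comp_apply, LinearMap.comp_apply, basis_apply, ofMulAction_single,
        MulAction.Quotient.smul_mk, ← basis_apply k, ← basis_apply k,
        Module.Basis.constr_basis, Module.Basis.constr_basis]
      exact congrArg (· v) (map_mul ρ g a)

theorem quotientLift_single (g : G) :
    quotientLift ρ H v hv (single (g : G ⧸ H) 1) = ρ g v := by
  rw [← basis_apply k]
  exact (MonoidAlgebra.basis (G ⧸ H) k).constr_basis k _ _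

end QuotientLift

variable (k) in
noncomputable def quotientTransfer (H L : Subgroup G) [Fintype H] :
    (ofMulAction k G (G ⧸ H)).IntertwiningMap (ofMulAction k G (G ⧸ L)) :=
  quotientLift _ H (∑ h : H, single ((h : G) : G ⧸ L) 1) fun h hh => by
    simp only [map_sum, ofMulAction_single, MulAction.Quotient.smul_mk]
    exact Fintype.sum_equiv (Equiv.mulLeft ⟨h, hh⟩) _ _ fun _ => rfl

theorem augmentation_quotientTransfer (H L : Subgroup G) [Fintype H]
    (x : MonoidAlgebra k (G ⧸ H)) :
    augmentation k (G ⧸ L) (quotientTransfer k H L x) =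
      Fintype.card H * augmentation k (G ⧸ H) x := by
  have h : augmentation k (G ⧸ L) ∘ₗ (quotientTransfer k H L).toLinearMap =
      (Fintype.card H : k) • augmentation k (G ⧸ H) :=
    (MonoidAlgebra.basis (G ⧸ H) k).ext fun y => by
      induction y using QuotientGroup.induction_on with
      | H g => simp [basis_apply, quotientTransfer, quotientLift_single]
  exact LinearMap.congr_fun h x

end Representation

open Representation

theorem stmt0_general (k : Type) [Field k] (p : ℕ) [CharP k p]
    (G : Type) [Group G] [Finite G] (H : Subgroup G) (hH : HasIp k p H)
    (L : Subgroup G) (hL : ¬ p ∣ Nat.card L) :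
    (∃ N N' : Submodule (MonoidAlgebra k G) (PermMod k L),
      IsCompl N N' ∧ Nonempty (N ≃ₗ[MonoidAlgebra k G] PermMod k H)) ∧
    Nat.card L ≤ Nat.card H := by
  have : Fintype H := Fintype.ofFinite H
  have : Fintype L := Fintype.ofFinite L
  have card_ne_zero {K : Subgroup G} [Fintype K] (hK : ¬ p ∣ Nat.card K) :
      (Fintype.card K : k) ≠ 0 := by
    rwa [Ne, CharP.cast_eq_zero_iff k p, ← Nat.card_eq_fintype_card]
  let f := IntertwiningMap.equivLinearMapAsModule _ _ (quotientTransfer k H L)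
  let g := IntertwiningMap.equivLinearMapAsModule _ _ (quotientTransfer k L H)
  have haug (x : MonoidAlgebra k (G ⧸ H)) :
      augmentation k _ (quotientTransfer k L H (quotientTransfer k H L x)) =
        (Fintype.card L * Fintype.card H) * augmentation k _ x := by
    rw [augmentation_quotientTransfer, augmentation_quotientTransfer, mul_assoc]
  have hgf : Function.Bijective (g ∘ₗ f) :=
    (hH.2.bijective_or_isNilpotent _).resolve_right <|
      Module.End.not_isNilpotent_of_map_apply_eq_mul (augmentation k (G ⧸ H)).toAddMonoidHom
        (mul_ne_zero (card_ne_zero hL) (card_ne_zero hH.1)) haug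
        (x := single ((1 : G) : G ⧸ H) 1) (by show augmentation k _ _ ≠ 0; simp)
  have hf : Function.Injective (quotientTransfer k H L).toLinearMap :=
    Function.Injective.of_comp (f := ⇑g) hgf.1
  refine ⟨f.exists_isCompl_linearEquiv_of_bijective_comp g hgf, ?_⟩
  refine Subgroup.card_le_card_of_index_le ?_
  simpa only [Subgroup.index, Module.finrank_eq_nat_card_basis (MonoidAlgebra.basis _ k)] using
    LinearMap.finrank_le_finrank_of_injective hf

/-- If a finite group `G` has property `(I_p)` with respect to `H`, then for every
`p'`-subgroup `L ≤ G` the permutation module `k[G/H]` is a direct summand of `k[G/L]`;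
in particular `|L| ≤ |H|`. -/
theorem stmt0 (k : Type) [Field k] (p : ℕ) [Fact p.Prime] [IsAlgClosed k] [CharP k p]
    (G : Type) [Group G] [Finite G] (H : Subgroup G) (hH : HasIp k p H)
    (L : Subgroup G) (hL : ¬ p ∣ Nat.card L) :
    (∃ N N' : Submodule (MonoidAlgebra k G) (PermMod k L),
      IsCompl N N' ∧ Nonempty (N ≃ₗ[MonoidAlgebra k G] PermMod k H)) ∧
    Nat.card L ≤ Nat.card H :=
  stmt0_general k p G H hH L hL
end

section
/- Let G be a finite group and H ≤ L ≤ G subgroups. If G has property (I_p) with respect to H, then L has property (I_p) with respect to H. -/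
/-!
The coset space `G ⧸ H` is the `G`-set induced from the `L`-set `L ⧸ H'` (where `H' = H ∩ L`)
along the inclusion of cosets, so `k[G/H] ≅ Ind_L^G k[L/H']`. Induction turns a decomposition
`k[L/H'] = N ⊕ N'` into `k[G/H] = Ind N ⊕ Ind N'` and does not kill nonzero submodules, so
indecomposability of `k[G/H]` forces `N` or `N'` to vanish. The `p'`-condition transfers because
`H.subgroupOf L ≃* H`.
-/

open MonoidAlgebra Representation

namespace Representation

variable {k G X : Type*} [CommRing k] [Group G] [MulAction G X]

noncomputable def ofMulActionEquivFinsupp : (ofMulAction k G X).asModule ≃ₗ[k] (X →₀ k) :=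
  (ofMulAction k G X).asModuleEquiv ≪≫ₗ coeffLinearEquiv k

theorem ofMulActionEquivFinsupp_of_smul (g : G) (v : (ofMulAction k G X).asModule) (x : X) :
    ofMulActionEquivFinsupp (of k G g • v) x = ofMulActionEquivFinsupp v (g⁻¹ • x) := by
  simp only [ofMulActionEquivFinsupp, LinearEquiv.trans_apply, asModuleEquiv_map_smul,
    asAlgebraHom_of, coeffLinearEquiv_apply, coeff_ofMulAction]

@[ext]
theorem ofMulAction_asModule_ext {v w : (ofMulAction k G X).asModule}
    (h : ∀ x, ofMulActionEquivFinsupp v x = ofMulActionEquivFinsupp w x) : v = w :=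
  ofMulActionEquivFinsupp.injective (Finsupp.ext h)

theorem of_smul_ofMulActionEquivFinsupp_symm_single (g : G) (x : X) (c : k) :
    of k G g • (ofMulActionEquivFinsupp (G := G)).symm (Finsupp.single x c) =
      ofMulActionEquivFinsupp.symm (Finsupp.single (g • x) c) := by
  classical
  rw [LinearEquiv.eq_symm_apply]
  ext y
  rw [ofMulActionEquivFinsupp_of_smul, LinearEquiv.apply_symm_apply]
  simp only [Finsupp.single_apply, eq_inv_smul_iff]

theorem submodule_eq_top_of_forall_single_mem {S : Submodule k[G] (ofMulAction k G X).asModule}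
    (hS : ∀ x c, (ofMulActionEquivFinsupp (G := G)).symm (Finsupp.single x c) ∈ S) :
    S = ⊤ := by
  refine eq_top_iff.mpr fun v _ => ?_
  rw [← ofMulActionEquivFinsupp.symm_apply_apply v]
  induction ofMulActionEquivFinsupp v using Finsupp.induction_linear with
  | zero => rw [map_zero]; exact S.zero_mem
  | add f f' hf hf' => rw [map_add]; exact S.add_mem hf hf'
  | single x c => exact hS x c

end Representation

/-- `X` is induced from the `L`-set `Y` along `e`: `G ×_L Y → X, [g, y] ↦ g • e y` is a
bijection. -/
structure IsInducedAction {G X Y : Type*} [Group G] [MulAction G X] (L : Subgroup G)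
    [MulAction L Y] (e : Y → X) : Prop where
  injective : Function.Injective e
  map_smul (l : L) (y : Y) : e (l • y) = (l : G) • e y
  exists_smul_eq (x : X) : ∃ g : G, ∃ y, g • e y = x
  mem_of_smul_eq {g : G} {y y' : Y} : g • e y = e y' → g ∈ L

namespace IsInducedAction

variable {k G X Y : Type*} [CommRing k] [Group G] [MulAction G X] {L : Subgroup G}
  [MulAction L Y] {e : Y → X}

noncomputable def mapDomain (e : Y → X) :
    (ofMulAction k L Y).asModule →ₗ[k] (ofMulAction k G X).asModule :=
  ofMulActionEquivFinsupp.symm.toLinearMap ∘ₗ Finsupp.lmapDomain k k e ∘ₗ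
    ofMulActionEquivFinsupp.toLinearMap

/-- `v ↦ (y ↦ v (g • e y))`: the part of `v` on the translate `g • e(Y)`, pulled back to
`Y`. -/
noncomputable def comapSmul (h : IsInducedAction L e) (g : G) :
    (ofMulAction k G X).asModule →ₗ[k] (ofMulAction k L Y).asModule :=
  ofMulActionEquivFinsupp.symm.toLinearMap ∘ₗ
    Finsupp.lcomapDomain (g • e ·) ((MulAction.injective g).comp h.injective) ∘ₗ
    ofMulActionEquivFinsupp.toLinearMap

section

variable (h : IsInducedAction L e)

@[simp]
theorem ofMulActionEquivFinsupp_comapSmul (g : G) (v : (ofMulAction k G X).asModule) (y : Y) :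
    ofMulActionEquivFinsupp (h.comapSmul g v) y = ofMulActionEquivFinsupp v (g • e y) := by
  simp [comapSmul]

theorem ofMulActionEquivFinsupp_mapDomain_apply (he : Function.Injective e)
    (w : (ofMulAction k L Y).asModule) (y : Y) :
    ofMulActionEquivFinsupp (mapDomain (G := G) e w) (e y) = ofMulActionEquivFinsupp w y := by
  simp [mapDomain, Finsupp.mapDomain_apply he]

theorem mapDomain_injective (he : Function.Injective e) :
    Function.Injective (mapDomain (k := k) (G := G) (L := L) e) :=
  ofMulActionEquivFinsupp.symm.injective.comp
    ((Finsupp.mapDomain_injective he).comp ofMulActionEquivFinsupp.injective)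

theorem comapSmul_of_smul (a g : G) (v : (ofMulAction k G X).asModule) :
    h.comapSmul g (of k G a • v) = h.comapSmul (a⁻¹ * g) v := by
  ext y
  rw [ofMulActionEquivFinsupp_comapSmul, ofMulActionEquivFinsupp_of_smul,
    ofMulActionEquivFinsupp_comapSmul, mul_smul]

theorem comapSmul_mapDomain_of_mem (l : L) (w : (ofMulAction k L Y).asModule) :
    h.comapSmul l (mapDomain e w) = of k L l⁻¹ • w := by
  ext y
  rw [ofMulActionEquivFinsupp_comapSmul, ofMulActionEquivFinsupp_of_smul, inv_inv, ← h.map_smul,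
    ofMulActionEquivFinsupp_mapDomain_apply h.injective]

theorem comapSmul_mapDomain_of_notMem {g : G} (hg : g ∉ L) (w : (ofMulAction k L Y).asModule) :
    h.comapSmul g (mapDomain e w) = 0 := by
  ext y
  rw [ofMulActionEquivFinsupp_comapSmul, map_zero, Finsupp.zero_apply]
  simp only [mapDomain, LinearMap.coe_comp, LinearEquiv.coe_coe, Function.comp_apply,
    LinearEquiv.apply_symm_apply, Finsupp.lmapDomain_apply]
  exact Finsupp.mapDomain_of_notMem_range _ _ fun ⟨y', hy'⟩ => hg (h.mem_of_smul_eq hy'.symm)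

theorem eq_zero_of_forall_comapSmul_eq_zero {v : (ofMulAction k G X).asModule}
    (hv : ∀ g, h.comapSmul g v = 0) : v = 0 := by
  apply ofMulActionEquivFinsupp.injective
  ext x
  obtain ⟨g, y, rfl⟩ := h.exists_smul_eq x
  simpa using congr(ofMulActionEquivFinsupp $(hv g) y)

/-- The induced submodule `Ind_L^G N = ⨁_{gL} g • N`. -/
noncomputable def indSubmodule (N : Submodule k[L] (ofMulAction k L Y).asModule) :
    Submodule k[G] (ofMulAction k G X).asModule where
  carrier := {v | ∀ g, h.comapSmul g v ∈ N}
  zero_mem' g := by rw [map_zero]; exact N.zero_mem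
  add_mem' hv hw g := by rw [map_add]; exact N.add_mem (hv g) (hw g)
  smul_mem' r v hv := by
    induction r using MonoidAlgebra.induction_on with
    | of a => intro g; rw [comapSmul_of_smul]; exact hv _
    | add r r' hr hr' => intro g; rw [add_smul, map_add]; exact N.add_mem (hr g) (hr' g)
    | smul c r hr =>
      intro g; rw [smul_assoc, LinearMap.map_smul]; exact N.smul_of_tower_mem c (hr g)

variable {h} in
theorem mem_indSubmodule {N : Submodule k[L] (ofMulAction k L Y).asModule}
    {v : (ofMulAction k G X).asModule} : v ∈ h.indSubmodule N ↔ ∀ g, h.comapSmul g v ∈ N :=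
  Iff.rfl

theorem mapDomain_mem_indSubmodule {N : Submodule k[L] (ofMulAction k L Y).asModule}
    {w : (ofMulAction k L Y).asModule} (hw : w ∈ N) : mapDomain e w ∈ h.indSubmodule N := by
  intro g
  by_cases hg : g ∈ L
  · rw [show g = ((⟨g, hg⟩ : L) : G) from rfl, h.comapSmul_mapDomain_of_mem]
    exact N.smul_mem _ hw
  · rw [h.comapSmul_mapDomain_of_notMem hg]
    exact N.zero_mem

theorem indSubmodule_ne_bot {N : Submodule k[L] (ofMulAction k L Y).asModule} (hN : N ≠ ⊥) :
    h.indSubmodule N ≠ ⊥ := by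
  obtain ⟨w, hwN, hw⟩ := N.exists_mem_ne_zero_of_ne_bot hN
  refine (Submodule.ne_bot_iff _).mpr ⟨mapDomain e w, h.mapDomain_mem_indSubmodule hwN, ?_⟩
  exact (map_ne_zero_iff _ (mapDomain_injective h.injective)).mpr hw

theorem indSubmodule_inf (N N' : Submodule k[L] (ofMulAction k L Y).asModule) :
    h.indSubmodule (N ⊓ N') = h.indSubmodule N ⊓ h.indSubmodule N' := by
  ext v
  simp only [Submodule.mem_inf, mem_indSubmodule, forall_and]

theorem indSubmodule_bot : h.indSubmodule (k := k) ⊥ = ⊥ :=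
  eq_bot_iff.mpr fun _ hv => (Submodule.mem_bot _).mpr
    (h.eq_zero_of_forall_comapSmul_eq_zero fun g => (Submodule.mem_bot _).mp (hv g))

theorem of_smul_mapDomain_single (g : G) (y : Y) (c : k) :
    of k G g • mapDomain e (ofMulActionEquivFinsupp (G := L).symm (Finsupp.single y c)) =
      ofMulActionEquivFinsupp.symm (Finsupp.single (g • e y) c) := by
  rw [← of_smul_ofMulActionEquivFinsupp_symm_single]
  congr 1
  simp [mapDomain]

theorem indSubmodule_sup_eq_top {N N' : Submodule k[L] (ofMulAction k L Y).asModule}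
    (hNN' : N ⊔ N' = ⊤) : h.indSubmodule N ⊔ h.indSubmodule N' = ⊤ := by
  refine submodule_eq_top_of_forall_single_mem fun x c => ?_
  obtain ⟨g, y, rfl⟩ := h.exists_smul_eq x
  have hyc : (ofMulActionEquivFinsupp (G := L)).symm (Finsupp.single y c) ∈ N ⊔ N' :=
    hNN' ▸ Submodule.mem_top
  obtain ⟨w, hw, w', hw', hww'⟩ := Submodule.mem_sup.mp hyc
  rw [← of_smul_mapDomain_single (L := L), ← hww', map_add, smul_add]
  exact Submodule.add_mem_sup (Submodule.smul_mem _ _ (h.mapDomain_mem_indSubmodule hw))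
    (Submodule.smul_mem _ _ (h.mapDomain_mem_indSubmodule hw'))

theorem isCompl_indSubmodule {N N' : Submodule k[L] (ofMulAction k L Y).asModule}
    (hNN' : IsCompl N N') : IsCompl (h.indSubmodule N) (h.indSubmodule N') where
  disjoint := by
    rw [disjoint_iff, ← indSubmodule_inf, hNN'.inf_eq_bot, indSubmodule_bot]
  codisjoint := codisjoint_iff.mpr (h.indSubmodule_sup_eq_top hNN'.sup_eq_top)

end

theorem nontrivial (h : IsInducedAction L e) (hX : Nontrivial (ofMulAction k G X).asModule) :
    Nontrivial (ofMulAction k L Y).asModule := by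
  by_contra hY
  rw [not_nontrivial_iff_subsingleton] at hY
  obtain ⟨v, hv⟩ := exists_ne (0 : (ofMulAction k G X).asModule)
  exact hv (h.eq_zero_of_forall_comapSmul_eq_zero fun g => Subsingleton.elim _ _)

theorem isIndecomposableModule (h : IsInducedAction L e)
    (hX : IsIndecomposableModule k[G] (ofMulAction k G X).asModule) :
    IsIndecomposableModule k[L] (ofMulAction k L Y).asModule := by
  refine ⟨h.nontrivial hX.1, fun N N' hNN' => ?_⟩
  refine (hX.2 _ _ (h.isCompl_indSubmodule hNN')).imp ?_ ?_ <;>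
    exact not_imp_not.mp h.indSubmodule_ne_bot

end IsInducedAction

namespace Subgroup

variable {G : Type*} [Group G]

def quotientSubgroupOfToQuotient (H L : Subgroup G) : L ⧸ H.subgroupOf L → G ⧸ H :=
  Quotient.map' Subtype.val fun _ _ => by
    simp only [QuotientGroup.leftRel_apply, mem_subgroupOf, coe_mul, coe_inv, imp_self]

theorem quotientSubgroupOfToQuotient_mk (H L : Subgroup G) (a : L) :
    quotientSubgroupOfToQuotient H L a = (a : G) :=
  rfl

theorem isInducedAction_quotientSubgroupOfToQuotient {H L : Subgroup G} (hHL : H ≤ L) :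
    IsInducedAction L (quotientSubgroupOfToQuotient H L) where
  injective := by
    intro x y hxy
    induction x using QuotientGroup.induction_on with | H a =>
    induction y using QuotientGroup.induction_on with | H b =>
    rw [quotientSubgroupOfToQuotient_mk, quotientSubgroupOfToQuotient_mk, QuotientGroup.eq] at hxy
    rwa [QuotientGroup.eq, mem_subgroupOf]
  map_smul := by
    rintro l ⟨a⟩
    rfl
  exists_smul_eq := by
    intro x
    induction x using QuotientGroup.induction_on with | H g =>
    exact ⟨g, ((1 : L) : L ⧸ H.subgroupOf L), by simp [quotientSubgroupOfToQuotient_mk]⟩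
  mem_of_smul_eq := by
    intro g y y' hgy
    induction y using QuotientGroup.induction_on with | H a =>
    induction y' using QuotientGroup.induction_on with | H b =>
    rw [quotientSubgroupOfToQuotient_mk, quotientSubgroupOfToQuotient_mk,
      MulAction.Quotient.smul_mk, QuotientGroup.eq] at hgy
    rw [show g = b * ((g * a)⁻¹ * b)⁻¹ * (a : G)⁻¹ by group]
    exact L.mul_mem (L.mul_mem b.2 (L.inv_mem (hHL hgy))) (L.inv_mem a.2)

end Subgroup

theorem stmt2_general (k : Type) [Field k] (p : ℕ)
    (G : Type) [Group G] (H L : Subgroup G) (hHL : H ≤ L)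
    (hG : HasIp k p H) :
    HasIp k p (H.subgroupOf L) :=
  ⟨by rw [Nat.card_congr (Subgroup.subgroupOfEquivOfLe hHL).toEquiv]; exact hG.1,
    (Subgroup.isInducedAction_quotientSubgroupOfToQuotient hHL).isIndecomposableModule hG.2⟩

/-- If `H ≤ L ≤ G` and `G` has property `(I_p)` with respect to `H`, then `L` has property
`(I_p)` with respect to `H`. -/
theorem stmt2 (k : Type) [Field k] (p : ℕ) [Fact p.Prime] [IsAlgClosed k] [CharP k p]
    (G : Type) [Group G] [Finite G] (H L : Subgroup G) (hHL : H ≤ L)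
    (hG : HasIp k p H) :
    HasIp k p (H.subgroupOf L) :=
  stmt2_general k p G H L hHL hG
end

section
/- Let G be a finite group having property (I_p) with respect to a subgroup H. If S is a simple kG-module whose subspace of H-fixed points S^H is nonzero, then S is isomorphic to the trivial kG-module k. -/
/-!
Let `e = |H|⁻¹ ∑_{h ∈ H} h ∈ k[G]`, an idempotent since `p ∤ |H|`. The left ideal `k[G] e` is
isomorphic to `k[G/H]` via `g e ↦ gH`, so it is indecomposable of finite length, and every module
with a nonzero `H`-fixed vector `w = e w` is a quotient of it through `x ↦ x w`. If two simple
quotients had distinct kernels, we could write `e = x + y` with `x`, `y` in the two kernels; right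
multiplications by `x` and `y` add up to the identity of `k[G] e`, so by Fitting's lemma one of
them is invertible, which forces `e` into one of the kernels. Hence the simple modules `S` and `k`
are both the unique simple quotient of `k[G] e`.
-/

open MonoidAlgebra Submodule

namespace IsIndecomposableModule

variable {R M N : Type*} [Ring R] [AddCommGroup M] [Module R M] [AddCommGroup N] [Module R N]

theorem of_linearEquiv (h : IsIndecomposableModule R M) (f : M ≃ₗ[R] N) :
    IsIndecomposableModule R N := by
  have := h.1
  refine ⟨f.injective.nontrivial, fun P P' hP => ?_⟩
  simpa using h.2 _ _ ((orderIsoMapComap f.symm).isCompl hP)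

theorem bijective_or_isNilpotent_s5 [IsArtinian R M] [IsNoetherian R M]
    (h : IsIndecomposableModule R M) (f : Module.End R M) :
    Function.Bijective f ∨ IsNilpotent f := by
  obtain ⟨n, hn, hn1⟩ :=
    (f.eventually_isCompl_ker_pow_range_pow.and (Filter.eventually_ge_atTop 1)).exists
  refine (h.2 _ _ hn).imp (fun hker => ?_) (fun hrange => ⟨n, LinearMap.range_eq_bot.mp hrange⟩)
  refine IsArtinian.bijective_of_injective_endomorphism f (LinearMap.ker_eq_bot.mp ?_)
  refine le_bot_iff.mp (hker ▸ fun x hx => ?_)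
  rw [LinearMap.mem_ker] at hx ⊢
  rw [← Nat.sub_add_cancel hn1, pow_succ, Module.End.mul_apply, hx, map_zero]

theorem isUnit_or_isUnit_of_add_eq_one [IsArtinian R M] [IsNoetherian R M]
    (h : IsIndecomposableModule R M) {f g : Module.End R M} (hfg : f + g = 1) :
    IsUnit f ∨ IsUnit g := by
  refine (h.bijective_or_isNilpotent_s5 f).imp (Module.End.isUnit_iff f).mpr fun hf => ?_
  rw [eq_sub_of_add_eq' hfg]
  exact hf.isUnit_one_sub

end IsIndecomposableModule

theorem IsSimpleModule.of_isScalarTower (R : Type*) {A M : Type*} [Ring R] [Ring A]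
    [AddCommGroup M] [Module R M] [Module A M] [SMul R A] [IsScalarTower R A M]
    [IsSimpleModule R M] : IsSimpleModule A M := by
  have := IsSimpleModule.nontrivial R M
  have : Nontrivial (Submodule A M) := (nontrivial_iff A).mpr this
  exact (isSimpleModule_iff A M).mpr ⟨fun N => (eq_bot_or_eq_top (N.restrictScalars R)).imp
    (restrictScalars_eq_bot_iff R A M).mp (restrictScalars_eq_top_iff R A M).mp⟩

section LeftIdeal

variable {R : Type*} [Ring R] {e : R} {W : Type*} [AddCommGroup W] [Module R W]

theorem surjective_toSpanSingleton_comp_subtype [IsSimpleModule R W] {w : W} (hw : w ≠ 0)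
    (hew : e • w = w) :
    Function.Surjective (LinearMap.toSpanSingleton R W w ∘ₗ (R ∙ e).subtype) := by
  intro v
  obtain ⟨a, rfl⟩ := IsSimpleModule.toSpanSingleton_surjective R hw v
  refine ⟨⟨a * e, smul_mem _ a (mem_span_singleton_self e)⟩, ?_⟩
  simp [mul_smul, hew]

theorem not_surjective_toSpanSingleton_comp_subtype {w : W} (hw : w ≠ 0) (hew : e • w = w)
    {z : R ∙ e} (hz : (z : R) • w = 0) :
    ¬ Function.Surjective (LinearMap.toSpanSingleton R (R ∙ e) z ∘ₗ (R ∙ e).subtype) := by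
  intro hsurj
  obtain ⟨m, hm⟩ := hsurj ⟨e, mem_span_singleton_self e⟩
  have hme : (m : R) * z = e := congrArg Subtype.val hm
  rw [← hew, ← hme, mul_smul, hz, smul_zero] at hw
  exact hw rfl

theorem IsIdempotentElem.nonempty_linearEquiv_of_smul_eq_self (he : IsIdempotentElem e)
    (hind : IsIndecomposableModule R (R ∙ e)) [IsArtinian R (R ∙ e)] [IsNoetherian R (R ∙ e)]
    {S T : Type*} [AddCommGroup S] [Module R S] [IsSimpleModule R S]
    [AddCommGroup T] [Module R T] [IsSimpleModule R T]
    {s : S} {t : T} (hs : s ≠ 0) (ht : t ≠ 0) (hes : e • s = s) (het : e • t = t) :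
    Nonempty (S ≃ₗ[R] T) := by
  let φ := LinearMap.toSpanSingleton R S s ∘ₗ (R ∙ e).subtype
  let τ := LinearMap.toSpanSingleton R T t ∘ₗ (R ∙ e).subtype
  have hφ := surjective_toSpanSingleton_comp_subtype hs hes
  have hτ := surjective_toSpanSingleton_comp_subtype ht het
  by_cases hker : LinearMap.ker φ = LinearMap.ker τ
  · exact ⟨(φ.quotKerEquivOfSurjective hφ).symm ≪≫ₗ quotEquivOfEq _ _ hker ≪≫ₗ
      τ.quotKerEquivOfSurjective hτ⟩
  exfalso
  have hsup := (LinearMap.isCoatom_ker_of_surjective hφ).sup_eq_top_of_ne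
    (LinearMap.isCoatom_ker_of_surjective hτ) hker
  obtain ⟨x, hx, y, hy, hxy⟩ :=
    mem_sup.mp (hsup ▸ mem_top (x := (⟨e, mem_span_singleton_self e⟩ : R ∙ e)))
  let ρ (z : R ∙ e) : Module.End R (R ∙ e) := LinearMap.toSpanSingleton R _ z ∘ₗ (R ∙ e).subtype
  have hρ : ρ x + ρ y = 1 := by
    ext m
    simp only [ρ, LinearMap.add_apply, LinearMap.comp_apply, subtype_apply,
      LinearMap.toSpanSingleton_apply, ← smul_add, hxy, Module.End.one_apply]
    obtain ⟨a, ha⟩ := mem_span_singleton.mp m.2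
    rw [coe_smul, ← ha, smul_eq_mul, smul_eq_mul, mul_assoc, he.eq]
  rcases hind.isUnit_or_isUnit_of_add_eq_one hρ with hu | hu
  · exact not_surjective_toSpanSingleton_comp_subtype hs hes hx
      ((Module.End.isUnit_iff _).mp hu).surjective
  · exact not_surjective_toSpanSingleton_comp_subtype ht het hy
      ((Module.End.isUnit_iff _).mp hu).surjective

end LeftIdeal

namespace GroupAlgebra

variable (k : Type*) [Field k] {G : Type*} [Group G] (H : Subgroup G) [Fintype H]
  [Invertible (Fintype.card H : k)]

noncomputable def subgroupAverage : k[G] := ⅟(Fintype.card H : k) • ∑ h : H, of k G h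

variable {k H}

theorem of_mul_subgroupAverage {g : G} (hg : g ∈ H) :
    of k G g * subgroupAverage k H = subgroupAverage k H := by
  rw [subgroupAverage, mul_smul_comm, Finset.mul_sum]
  congr 1
  exact Fintype.sum_equiv (Equiv.mulLeft ⟨g, hg⟩) _ _ fun h => by rw [← map_mul]; rfl

theorem subgroupAverage_smul {W : Type*} [AddCommGroup W] [Module k[G] W] {w : W}
    (hw : ∀ h ∈ H, of k G h • w = w) : subgroupAverage k H • w = w := by
  have hsum : (∑ h : H, of k G h) • w = algebraMap k k[G] (Fintype.card H) • w := by
    rw [Finset.sum_smul, Finset.sum_congr rfl fun h _ => hw _ h.2, Finset.sum_const,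
      Finset.card_univ, ← Nat.cast_smul_eq_nsmul k[G], map_natCast]
  rw [subgroupAverage, Algebra.smul_def, mul_smul, hsum, ← mul_smul, ← map_mul, invOf_mul_self,
    map_one, one_smul]

theorem mul_subgroupAverage_mem (a : k[G]) : a * subgroupAverage k H ∈ k[G] ∙ subgroupAverage k H :=
  smul_mem _ a (mem_span_singleton_self _)

variable (k H) in
theorem isIdempotentElem_subgroupAverage : IsIdempotentElem (subgroupAverage k H) :=
  subgroupAverage_smul (k := k) (H := H) fun _ hh => of_mul_subgroupAverage hh

end GroupAlgebra

namespace PermMod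

open GroupAlgebra

variable (k : Type*) [Field k] {G : Type*} [Group G] (H : Subgroup G)

noncomputable def single (C : G ⧸ H) (c : k) : PermMod k H :=
  (Representation.ofMulAction k G (G ⧸ H)).asModuleEquiv.symm (MonoidAlgebra.single C c)

variable {k H}

theorem of_smul_single (g : G) (C : G ⧸ H) (c : k) :
    of k G g • single k H C c = single k H (g • C) c := by
  rw [single, ← Representation.asModuleEquiv_symm_map_rho, Representation.ofMulAction_single,
    single]

theorem smul_single_one (c : k) (C : G ⧸ H) : c • single k H C 1 = single k H C c := by
  rw [single, ← map_smul, MonoidAlgebra.smul_single, smul_eq_mul, mul_one, single]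

variable [Fintype H] [Invertible (Fintype.card H : k)]

theorem subgroupAverage_smul_single_one :
    subgroupAverage k H • single k H ((1 : G) : G ⧸ H) 1 = single k H ((1 : G) : G ⧸ H) 1 :=
  subgroupAverage_smul fun h hh => by
    rw [of_smul_single, MulAction.Quotient.smul_coe, smul_eq_mul, mul_one,
      QuotientGroup.eq.mpr (by simpa using hh : h⁻¹ * 1 ∈ H)]

variable (k H) in
noncomputable def toSpanSubgroupAverage : PermMod k H →ₗ[k] k[G] ∙ subgroupAverage k H :=
  Finsupp.linearCombination k (fun C : G ⧸ H => ⟨of k G C.out * _, mul_subgroupAverage_mem _⟩) ∘ₗ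
    (coeffLinearEquiv k).toLinearMap ∘ₗ
    (Representation.ofMulAction k G (G ⧸ H)).asModuleEquiv.toLinearMap

theorem toSpanSubgroupAverage_smul_single_one (z : PermMod k H) :
    (toSpanSubgroupAverage k H z : k[G]) • single k H ((1 : G) : G ⧸ H) 1 = z := by
  obtain ⟨f, rfl⟩ := (Representation.ofMulAction k G (G ⧸ H)).asModuleEquiv.symm.surjective z
  induction f using MonoidAlgebra.induction_linear with
  | zero => simp
  | add f g hf hg => rw [map_add, map_add, Submodule.coe_add, add_smul, hf, hg]
  | single C c =>
    change (toSpanSubgroupAverage k H (single k H C c) : k[G]) • _ = single k H C c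
    have hC : (toSpanSubgroupAverage k H (single k H C c) : k[G]) =
        c • (of k G C.out * subgroupAverage k H) := by
      simp [toSpanSubgroupAverage, single]
    rw [hC, smul_assoc, mul_smul, subgroupAverage_smul_single_one, of_smul_single,
      MulAction.Quotient.smul_coe, smul_eq_mul, mul_one, QuotientGroup.out_eq', smul_single_one]

theorem surjective_toSpanSubgroupAverage : Function.Surjective (toSpanSubgroupAverage k H) := by
  rintro ⟨m, hm⟩
  obtain ⟨a, rfl⟩ := mem_span_singleton.mp hm
  suffices ∃ z, (toSpanSubgroupAverage k H z : k[G]) = a * subgroupAverage k H from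
    this.imp fun z hz => Subtype.ext hz
  clear hm
  induction a using MonoidAlgebra.induction_on with
  | of g =>
    obtain ⟨h, hh⟩ := QuotientGroup.mk_out_eq_mul H g
    have hgh : of k G (g * h) * subgroupAverage k H = of k G g * subgroupAverage k H := by
      rw [map_mul, mul_assoc, of_mul_subgroupAverage h.2]
    exact ⟨single k H g 1, by simpa [toSpanSubgroupAverage, single, hh] using hgh⟩
  | add a b ha hb =>
    obtain ⟨z, hz⟩ := ha
    obtain ⟨w, hw⟩ := hb
    exact ⟨z + w, by simp [hz, hw, add_mul]⟩
  | smul r a ha =>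
    obtain ⟨z, hz⟩ := ha
    exact ⟨r • z, by simp [hz]⟩

theorem bijective_toSpanSingleton_comp_subtype :
    Function.Bijective (LinearMap.toSpanSingleton k[G] _ (single k H ((1 : G) : G ⧸ H) 1) ∘ₗ
      (k[G] ∙ subgroupAverage k H).subtype) := by
  have hinv : Function.LeftInverse (LinearMap.toSpanSingleton k[G] _ (single k H (1 : G) 1) ∘ₗ
      (k[G] ∙ subgroupAverage k H).subtype) (toSpanSubgroupAverage k H) :=
    toSpanSubgroupAverage_smul_single_one
  exact ⟨(hinv.rightInverse_of_surjective surjective_toSpanSubgroupAverage).injective,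
    hinv.surjective⟩

end PermMod

theorem stmt5_general (k : Type) [Field k] (p : ℕ) [CharP k p]
    (G : Type) [Group G] [Finite G] (H : Subgroup G) (hG : HasIp k p H)
    (S : Type) [AddCommGroup S] [Module (MonoidAlgebra k G) S]
    [IsSimpleModule (MonoidAlgebra k G) S]
    (hfix : ∃ s : S, s ≠ 0 ∧ ∀ h : G, h ∈ H → (MonoidAlgebra.of k G h) • s = s) :
    Nonempty (S ≃ₗ[MonoidAlgebra k G] (Representation.trivial k (G := G) (V := k)).asModule) := by
  obtain ⟨s, hs, hsH⟩ := hfix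
  have := Fintype.ofFinite H
  have : Invertible (Fintype.card H : k) := invertibleOfNonzero <| by
    rw [Ne, CharP.cast_eq_zero_iff k p, ← Nat.card_eq_fintype_card]
    exact hG.1
  have hind : IsIndecomposableModule k[G] (k[G] ∙ GroupAlgebra.subgroupAverage k H) :=
    hG.2.of_linearEquiv (.symm (.ofBijective _ PermMod.bijective_toSpanSingleton_comp_subtype))
  have : IsArtinianRing k[G] := IsArtinianRing.of_finite k k[G]
  have : IsNoetherianRing k[G] := isNoetherian_of_tower k inferInstance
  let ρ := Representation.trivial k (G := G) (V := k)
  have : IsSimpleModule k ρ.asModule := inferInstanceAs (IsSimpleModule k k)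
  have : IsSimpleModule k[G] ρ.asModule := .of_isScalarTower k
  refine (GroupAlgebra.isIdempotentElem_subgroupAverage k H).nonempty_linearEquiv_of_smul_eq_self
    hind hs (t := ρ.asModuleEquiv.symm 1) (by simp) (GroupAlgebra.subgroupAverage_smul hsH)
    (GroupAlgebra.subgroupAverage_smul fun h _ => ?_)
  rw [← Representation.asModuleEquiv_symm_map_rho, Representation.trivial_apply]

/-- If `G` has property `(I_p)` with respect to `H` and `S` is a simple `k[G]`-module with a
nonzero `H`-fixed point, then `S` is the trivial module. -/
theorem stmt5 (k : Type) [Field k] (p : ℕ) [Fact p.Prime] [IsAlgClosed k] [CharP k p]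
    (G : Type) [Group G] [Finite G] (H : Subgroup G) (hG : HasIp k p H)
    (S : Type) [AddCommGroup S] [Module (MonoidAlgebra k G) S]
    [IsSimpleModule (MonoidAlgebra k G) S]
    (hfix : ∃ s : S, s ≠ 0 ∧ ∀ h : G, h ∈ H → (MonoidAlgebra.of k G h) • s = s) :
    Nonempty (S ≃ₗ[MonoidAlgebra k G] (Representation.trivial k (G := G) (V := k)).asModule) :=
  stmt5_general k p G H hG S hfix
end
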